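/- For each fixed t > 0 and y ≥ 0, the function β ↦ Φ((y - βt)/(σ√t)) - e^{2βy/σ²} Φ((-y - βt)/(σ√t)) is monotone decreasing in β, where Φ is the standard normal CDF. -/

import Mathlib

/-! Differentiate in `β`. The two Gaussian-density terms cancel, because
`e^{2βy/σ²} φ((-y - βt)/(σ√t)) = φ((y - βt)/(σ√t))` (complete the square), so the derivative is
`-(2y/σ²) e^{2βy/σ²} Φ((-y - βt)/(σ√t)) ≤ 0`. -/

/-- The standard normal cumulative distribution function. -/
noncomputable def stdNormalCDF (x : ℝ) : ℝ :=
  (Real.sqrt (2 * Real.pi))⁻¹ * ∫ u in Set.Iic x, Real.exp (-(u ^ 2) / 2)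

noncomputable def stdNormalPDF (x : ℝ) : ℝ :=
  (Real.sqrt (2 * Real.pi))⁻¹ * Real.exp (-(x ^ 2) / 2)

noncomputable def reflectedBMCDF (σ t y β : ℝ) : ℝ :=
  stdNormalCDF ((y - β * t) / (σ * Real.sqrt t))
    - Real.exp (2 * β * y / σ ^ 2) * stdNormalCDF ((-y - β * t) / (σ * Real.sqrt t))

lemma integrable_exp_neg_sq_div_two :
    MeasureTheory.Integrable (fun u : ℝ => Real.exp (-(u ^ 2) / 2)) := by
  convert integrable_exp_neg_mul_sq (by norm_num : (0 : ℝ) < 1 / 2) using 2 with u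
  ring_nf

lemma stdNormalCDF_nonneg (x : ℝ) : 0 ≤ stdNormalCDF x :=
  mul_nonneg (by positivity)
    (MeasureTheory.setIntegral_nonneg measurableSet_Iic fun u _ => (Real.exp_pos _).le)

lemma hasDerivAt_stdNormalCDF (x : ℝ) : HasDerivAt stdNormalCDF (stdNormalPDF x) x := by
  have hcont : Continuous fun u : ℝ => Real.exp (-(u ^ 2) / 2) := by fun_prop
  have hint := integrable_exp_neg_sq_div_two
  have hsplit : stdNormalCDF = fun z => (Real.sqrt (2 * Real.pi))⁻¹ *
      ((∫ u in Set.Iic 0, Real.exp (-(u ^ 2) / 2)) + ∫ u in (0 : ℝ)..z, Real.exp (-(u ^ 2) / 2)) := by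
    funext z
    rw [← intervalIntegral.integral_Iic_sub_Iic hint.integrableOn hint.integrableOn,
      add_sub_cancel, stdNormalCDF]
  rw [hsplit]
  exact ((intervalIntegral.integral_hasDerivAt_right hint.intervalIntegrable
    hcont.stronglyMeasurable.stronglyMeasurableAtFilter hcont.continuousAt).const_add _).const_mul _

lemma hasDerivAt_stdNormalCDF_sub_mul_div (a t c β : ℝ) :
    HasDerivAt (fun β => stdNormalCDF ((a - β * t) / c))
      (stdNormalPDF ((a - β * t) / c) * (-t / c)) β := by
  have hinner : HasDerivAt (fun β : ℝ => (a - β * t) / c) (-t / c) β := by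
    simpa using (((hasDerivAt_id β).mul_const t).const_sub a).div_const c
  exact (hasDerivAt_stdNormalCDF _).comp β hinner

lemma exp_mul_stdNormalPDF_neg_sub_div (a b c : ℝ) :
    Real.exp (2 * a * b / c ^ 2) * stdNormalPDF ((-a - b) / c) = stdNormalPDF ((a - b) / c) := by
  rw [stdNormalPDF, stdNormalPDF, mul_left_comm, ← Real.exp_add]
  congr 2
  ring

lemma hasDerivAt_reflectedBMCDF (σ : ℝ) {t : ℝ} (ht : 0 < t) (y β : ℝ) :
    HasDerivAt (reflectedBMCDF σ t y)
      (-(2 * y / σ ^ 2 * Real.exp (2 * β * y / σ ^ 2)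
        * stdNormalCDF ((-y - β * t) / (σ * Real.sqrt t)))) β := by
  set c := σ * Real.sqrt t
  have hexp : HasDerivAt (fun β : ℝ => Real.exp (2 * β * y / σ ^ 2))
      (Real.exp (2 * β * y / σ ^ 2) * (2 * y / σ ^ 2)) β := by
    have hlin : HasDerivAt (fun β : ℝ => 2 * β * y / σ ^ 2) (2 * y / σ ^ 2) β := by
      simpa [mul_comm, mul_assoc] using
        (((hasDerivAt_id β).const_mul 2).mul_const y).div_const (σ ^ 2)
    exact hlin.exp
  have hdensity : Real.exp (2 * β * y / σ ^ 2) * stdNormalPDF ((-y - β * t) / c)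
      = stdNormalPDF ((y - β * t) / c) := by
    have hc2 : c ^ 2 = σ ^ 2 * t := by rw [mul_pow, Real.sq_sqrt ht.le]
    rw [← exp_mul_stdNormalPDF_neg_sub_div y (β * t) c, hc2]
    congr 2
    field_simp
  refine ((hasDerivAt_stdNormalCDF_sub_mul_div y t c β).sub
    (hexp.mul (hasDerivAt_stdNormalCDF_sub_mul_div (-y) t c β))).congr_deriv ?_
  rw [← hdensity]
  ring

theorem stmt2_general (σ t y : ℝ) (ht : 0 < t) (hy : 0 ≤ y) :
    Antitone (fun β : ℝ =>
      stdNormalCDF ((y - β * t) / (σ * Real.sqrt t))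
        - Real.exp (2 * β * y / σ ^ 2) * stdNormalCDF ((-y - β * t) / (σ * Real.sqrt t))) :=
  antitone_of_hasDerivAt_nonpos (hasDerivAt_reflectedBMCDF σ ht y) fun β =>
    neg_nonpos.mpr <|
      mul_nonneg (mul_nonneg (by positivity) (Real.exp_nonneg _)) (stdNormalCDF_nonneg _)

/-- For fixed `t > 0` and `y ≥ 0`, the RBM cdf
`β ↦ Φ((y - βt)/(σ√t)) - e^{2βy/σ²} Φ((-y - βt)/(σ√t))` is monotone decreasing in `β`. -/
theorem stmt2 (σ t y : ℝ) (hσ : 0 < σ) (ht : 0 < t) (hy : 0 ≤ y) :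
    Antitone (fun β : ℝ =>
      stdNormalCDF ((y - β * t) / (σ * Real.sqrt t))
        - Real.exp (2 * β * y / σ ^ 2) * stdNormalCDF ((-y - β * t) / (σ * Real.sqrt t))) :=
  stmt2_general σ t y ht hy
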